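/- arXiv:2111.01044 — 6 statements merged into one kernel-verified Lean document; each statement's English description precedes it below -/
import Mathlib

section
/- Let θ ∈ ℂ and let K be an imaginary quadratic field regarded as a subfield of ℂ with ring of integers 𝓞_K. Suppose k₀, ℓ₀ > 0 and E, Q > 1 are real numbers with 2ℓ₀E ≥ 1, and that for each integer r ≥ 0 there are p_r, q_r ∈ 𝓞_K satisfying p_r·q_{r+1} ≠ p_{r+1}·q_r, |q_r| < k₀·Q^r and |q_r·θ − p_r| ≤ ℓ₀·E^{−r}. Put κ = log Q / log E and c = 2k₀·(2ℓ₀E)^κ. Then for all p, q ∈ 𝓞_K with q ≠ 0 such that p/q ≠ p_r/q_r for every integer r ≥ 0 (interpreted as p·q_r ≠ p_r·q), we have |θ − p/q| > 1/(c·|q|^{κ+1}). -/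
open Finset MeasureTheory

noncomputable section

/-- Coefficient of `z^k` in `X_{m,n,r}(z) = ₂F₁(-r, -r-m/n; 1-m/n; z)`. -/
def Xcoef (m n r k : ℕ) : ℚ :=
  (r.choose k : ℚ) * ∏ j ∈ Finset.range k, ((((r : ℚ) - j) * n + m) / (((j : ℚ) + 1) * n - m))

/-- `X_{m,n,r}` as a function on `ℂ`. -/
def Xfun (m n r : ℕ) (z : ℂ) : ℂ :=
  ∑ k ∈ Finset.range (r + 1), (Xcoef m n r k : ℂ) * z ^ k

/-- `Y_{m,n,r}(z) = z^r · X_{m,n,r}(1/z)` as a polynomial function on `ℂ`. -/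
def Yfun (m n r : ℕ) (z : ℂ) : ℂ :=
  ∑ k ∈ Finset.range (r + 1), (Xcoef m n r k : ℂ) * z ^ (r - k)

/-- `X_{m,n,r}` as a function on `ℝ`. -/
def XfunR (m n r : ℕ) (z : ℝ) : ℝ :=
  ∑ k ∈ Finset.range (r + 1), (Xcoef m n r k : ℝ) * z ^ k

/-- `X_{m,n,r}` as a polynomial over `ℂ`. -/
def XpolyC (m n r : ℕ) : Polynomial ℂ :=
  ∑ k ∈ Finset.range (r + 1), Polynomial.C (Xcoef m n r k : ℂ) * Polynomial.X ^ k

/-- `D_{m,n,r}`: the least positive integer clearing the denominators of `X_{m,n,r}`. -/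
def Dden (m n r : ℕ) : ℕ :=
  sInf {D : ℕ | 0 < D ∧ ∀ k : ℕ, ∃ z : ℤ, (D : ℚ) * Xcoef m n r k = (z : ℚ)}

/-- The squarefree core of an integer `d`: the unique squarefree integer such that
`d/core d` is a square. -/
def intCore (d : ℤ) : ℤ :=
  d.sign * ∏ p ∈ d.natAbs.primeFactors, (p : ℤ) ^ (d.natAbs.factorization p % 2)

/-- The polynomial `X_{m,n,r}(1 - √d · z)` over `ℂ` (principal square root of `d`). -/
def Xshift (d : ℤ) (m n r : ℕ) : Polynomial ℂ :=
  ∑ k ∈ Finset.range (r + 1), Polynomial.C (Xcoef m n r k : ℂ) *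
    (1 - Polynomial.C ((d : ℂ) ^ (1/2 : ℂ)) * Polynomial.X) ^ k

/-- `N_{d,m,n,r}`: the largest positive integer `N` such that
`(D_{m,n,r}/N)·X_{m,n,r}(1-√d·z)` has all coefficients in `ℤ[√core d]`. -/
def Nden (d : ℤ) (m n r : ℕ) : ℕ :=
  sSup {N : ℕ | 0 < N ∧ ∀ k : ℕ, ∃ u v : ℤ,
    ((Dden m n r : ℂ) / (N : ℂ)) * (Xshift d m n r).coeff k
      = (u : ℂ) + (v : ℂ) * ((intCore d : ℂ) ^ (1/2 : ℂ))}

/-- `𝒩_{d,n} = ∏_{p | n} p^{min(v_p(d)/2, v_p(n)+1/(p-1))}`. -/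
def calN (d : ℤ) (n : ℕ) : ℝ :=
  ∏ p ∈ n.primeFactors,
    (p : ℝ) ^ (min ((d.natAbs.factorization p : ℝ) / 2)
      ((n.factorization p : ℝ) + 1 / ((p : ℝ) - 1)))

/-- `μ_n = ∏_{p | n} p^{1/(p-1)}`. -/
def muN (n : ℕ) : ℝ := ∏ p ∈ n.primeFactors, (p : ℝ) ^ (1 / ((p : ℝ) - 1))

/-- The Gamma-function factor appearing in the admissibility condition. -/
def gammaMax (m n r : ℕ) : ℝ :=
  max (max 1 (Real.Gamma (1 - (m : ℝ) / n) * r.factorial /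
      Real.Gamma ((r : ℝ) + 1 - (m : ℝ) / n)))
    ((n : ℝ) * Real.Gamma ((r : ℝ) + 1 + (m : ℝ) / n) /
      ((m : ℝ) * Real.Gamma ((m : ℝ) / n) * r.factorial))

/-- `(C, D)` is admissible for `(d, n)`. -/
def Admissible (d : ℤ) (n : ℕ) (C D : ℝ) : Prop :=
  ∀ m r : ℕ, 0 < m → 2 * m < n → Nat.Coprime m n →
    gammaMax m n r * (Dden m n r : ℝ) / (Nden d m n r : ℝ) < C * (D / calN d n) ^ r

/-- `K` is an imaginary quadratic field `ℚ(√-t)` viewed as a subfield of `ℂ`. -/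
def IsImagQuadratic (K : Subfield ℂ) : Prop :=
  ∃ t : ℕ, 0 < t ∧ Squarefree t ∧
    K = Subfield.closure {Complex.I * (Real.sqrt t : ℂ)}

/-- Pochhammer symbol `(x)_k = x(x+1)⋯(x+k-1)` over `ℂ`. -/
def poch (x : ℂ) (k : ℕ) : ℂ := ∏ j ∈ Finset.range k, (x + j)

/-- The remainder function `R_{m,n,r}(z)`. -/
def Rfun (m n r : ℕ) (z : ℂ) : ℂ :=
  ((∏ j ∈ Finset.range (r + 1), ((j : ℂ) + (m : ℂ) / n)) /
      ∏ j ∈ Finset.range (r + 1), ((r : ℂ) + 1 + j)) *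
    ∑' k : ℕ, poch ((r : ℂ) + 1 - (m : ℂ) / n) k * poch ((r : ℂ) + 1) k /
      (poch (2 * (r : ℂ) + 2) k * (k.factorial : ℂ)) * (1 - z) ^ k

/-!
A nonzero algebraic integer `z` of an imaginary quadratic field satisfies `‖z‖ ≥ 1`, since
`‖z‖² = z · conj z` is a positive rational integer. This applies to `Q'` and to
`w = P q_r - p_r Q'`. Choosing `r` with `2ℓ₀‖Q'‖ ≤ E^r ≤ 2ℓ₀E‖Q'‖`, the identity
`w = -q_r Q' (θ - P/Q') + Q' (q_r θ - p_r)` gives `1 ≤ ‖q_r‖ ‖Q'‖ ‖θ - P/Q'‖ + 1/2`, while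
`‖q_r‖ < k₀ Q^r = k₀ (E^r)^κ ≤ k₀ (2ℓ₀E‖Q'‖)^κ`.
-/

open Complex ComplexConjugate

lemma one_le_norm_of_isIntegral_of_normSq_eq_ratCast {z : ℂ} (hz : IsIntegral ℤ z)
    (hz0 : z ≠ 0) {s : ℚ} (hs : normSq z = s) : 1 ≤ ‖z‖ := by
  have hsI : IsIntegral ℤ s := by
    have h : IsIntegral ℤ (z * conj z) := hz.mul (hz.map (starRingEnd ℂ).toIntAlgHom)
    rw [mul_conj, hs] at h
    exact (isIntegral_algebraMap_iff (algebraMap ℚ ℂ).injective).mp h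
  obtain ⟨n, rfl⟩ := IsIntegrallyClosed.isIntegral_iff.mp hsI
  rw [algebraMap_int_eq, eq_intCast, Rat.cast_intCast] at hs
  have hn : (0 : ℝ) < n := hs ▸ normSq_pos.mpr hz0
  have hn1 : (1 : ℝ) ≤ ‖z‖ ^ 2 := by
    rw [← normSq_eq_norm_sq, hs]
    exact_mod_cast (show (0 : ℤ) < n by exact_mod_cast hn)
  exact one_le_sq_iff₀ (norm_nonneg z) |>.mp hn1

lemma I_mul_sqrt_mul_self (t : ℕ) : (I * Real.sqrt t) * (I * Real.sqrt t) = -(t : ℂ) := by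
  have h : (Real.sqrt t : ℂ) * Real.sqrt t = t := by
    rw [← ofReal_mul, Real.mul_self_sqrt t.cast_nonneg, ofReal_natCast]
  linear_combination (Real.sqrt t : ℂ) * Real.sqrt t * I_mul_I + -h

lemma conj_add_mul_I_mul_sqrt (t : ℕ) (a b : ℚ) :
    conj ((a : ℂ) + b * (I * Real.sqrt t)) = a - b * (I * Real.sqrt t) := by
  simp only [map_add, map_mul, map_ratCast, conj_I, conj_ofReal]
  ring

lemma normSq_add_mul_I_mul_sqrt (t : ℕ) (a b : ℚ) :
    normSq ((a : ℂ) + b * (I * Real.sqrt t)) = ((a ^ 2 + t * b ^ 2 : ℚ) : ℝ) := by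
  apply ofReal_injective
  rw [← mul_conj, conj_add_mul_I_mul_sqrt]
  push_cast
  linear_combination -(b : ℂ) ^ 2 * I_mul_sqrt_mul_self t

def imagQuadSubfield (t : ℕ) : Subfield ℂ where
  carrier := {z | ∃ a b : ℚ, z = a + b * (I * Real.sqrt t)}
  zero_mem' := ⟨0, 0, by simp⟩
  one_mem' := ⟨1, 0, by simp⟩
  add_mem' := by
    rintro _ _ ⟨a, b, rfl⟩ ⟨a', b', rfl⟩
    exact ⟨a + a', b + b', by push_cast; ring⟩
  neg_mem' := by
    rintro _ ⟨a, b, rfl⟩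
    exact ⟨-a, -b, by push_cast; ring⟩
  mul_mem' := by
    rintro _ _ ⟨a, b, rfl⟩ ⟨a', b', rfl⟩
    refine ⟨a * a' - t * b * b', a * b' + a' * b, ?_⟩
    push_cast
    linear_combination (b : ℂ) * b' * I_mul_sqrt_mul_self t
  inv_mem' := by
    rintro _ ⟨a, b, rfl⟩
    refine ⟨a / (a ^ 2 + t * b ^ 2), -b / (a ^ 2 + t * b ^ 2), ?_⟩
    rw [inv_def, conj_add_mul_I_mul_sqrt, normSq_add_mul_I_mul_sqrt]
    push_cast
    ring

lemma IsImagQuadratic.exists_normSq_eq_ratCast {K : Subfield ℂ} (hK : IsImagQuadratic K)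
    {z : ℂ} (hz : z ∈ K) : ∃ s : ℚ, normSq z = s := by
  obtain ⟨t, -, -, rfl⟩ := hK
  have hle : Subfield.closure {I * (Real.sqrt t : ℂ)} ≤ imagQuadSubfield t :=
    Subfield.closure_le.mpr (by simpa using ⟨0, 1, by simp⟩)
  obtain ⟨a, b, rfl⟩ := hle hz
  exact ⟨_, normSq_add_mul_I_mul_sqrt t a b⟩

lemma IsImagQuadratic.one_le_norm {K : Subfield ℂ} (hK : IsImagQuadratic K) {z : ℂ}
    (hz : z ∈ K) (hzI : IsIntegral ℤ z) (hz0 : z ≠ 0) : 1 ≤ ‖z‖ :=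
  let ⟨_, hs⟩ := hK.exists_normSq_eq_ratCast hz
  one_le_norm_of_isIntegral_of_normSq_eq_ratCast hzI hz0 hs

lemma norm_mul_sub_mul_le (θ P Q' p q : ℂ) (hQ' : Q' ≠ 0) :
    ‖P * q - p * Q'‖ ≤ ‖q‖ * ‖Q'‖ * ‖θ - P / Q'‖ + ‖Q'‖ * ‖q * θ - p‖ := by
  have h : P * q - p * Q' = -(q * Q' * (θ - P / Q')) + Q' * (q * θ - p) := by
    field_simp
    ring
  rw [h]
  refine (norm_add_le _ _).trans_eq ?_
  rw [norm_neg, norm_mul, norm_mul, norm_mul]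

lemma one_half_le_norm_mul_norm_mul_norm_sub_div {θ P Q' p q : ℂ} {ℓ : ℝ} (hQ' : Q' ≠ 0)
    (hsep : 1 ≤ ‖P * q - p * Q'‖) (happ : ‖q * θ - p‖ ≤ ℓ) (hℓ : 2 * ℓ * ‖Q'‖ ≤ 1) :
    1 / 2 ≤ ‖q‖ * ‖Q'‖ * ‖θ - P / Q'‖ := by
  have hle := norm_mul_sub_mul_le θ P Q' p q hQ'
  have happ' : ‖Q'‖ * ‖q * θ - p‖ ≤ ‖Q'‖ * ℓ := mul_le_mul_of_nonneg_left happ (norm_nonneg _)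
  linarith

lemma exists_pow_mem_Icc {E X : ℝ} (hE : 1 < E) (hX : 1 ≤ E * X) :
    ∃ r : ℕ, X ≤ E ^ r ∧ E ^ r ≤ E * X := by
  obtain ⟨r, hle, hlt⟩ := exists_nat_pow_near hX hE
  rw [pow_succ'] at hlt
  exact ⟨r, (lt_of_mul_lt_mul_left hlt (by linarith)).le, hle⟩

lemma pow_le_rpow_logb_of_pow_le {E Q X : ℝ} (hE : 1 < E) (hQ : 1 ≤ Q) {r : ℕ}
    (h : E ^ r ≤ X) : Q ^ r ≤ X ^ Real.logb E Q := by
  have hE0 : 0 < E := by linarith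
  have hQE : Q ^ r = (E ^ r) ^ Real.logb E Q := by
    conv_lhs => rw [← Real.rpow_logb hE0 hE.ne' (by linarith : 0 < Q)]
    rw [← Real.rpow_mul_natCast hE0.le, mul_comm, Real.rpow_natCast_mul hE0.le]
  rw [hQE]
  exact Real.rpow_le_rpow (pow_nonneg hE0.le r) h (Real.logb_nonneg hE hQ)

theorem one_div_lt_norm_sub_div_of_approx {θ P Q' : ℂ} {p q : ℕ → ℂ} {k₀ ℓ₀ E Q : ℝ}
    (hE : 1 < E) (hQ : 1 ≤ Q) (hℓE : 1 ≤ 2 * ℓ₀ * E)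
    (hqbd : ∀ r, ‖q r‖ < k₀ * Q ^ r) (happ : ∀ r, ‖q r * θ - p r‖ ≤ ℓ₀ / E ^ r)
    (hQ' : 1 ≤ ‖Q'‖) (hsep : ∀ r, 1 ≤ ‖P * q r - p r * Q'‖) :
    1 / (2 * k₀ * (2 * ℓ₀ * E) ^ Real.logb E Q * ‖Q'‖ ^ (Real.logb E Q + 1))
      < ‖θ - P / Q'‖ := by
  set A := ‖Q'‖
  set δ := ‖θ - P / Q'‖
  set κ := Real.logb E Q
  have hk₀ : 0 < k₀ := by simpa using (norm_nonneg _).trans_lt (hqbd 0)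
  obtain ⟨r, hr, hr'⟩ := exists_pow_mem_Icc hE (X := 2 * ℓ₀ * A) (by nlinarith)
  have hhalf : 1 / 2 ≤ ‖q r‖ * (A * δ) := by
    rw [← mul_assoc]
    refine one_half_le_norm_mul_norm_mul_norm_sub_div (norm_pos_iff.mp (by linarith))
      (hsep r) (happ r) ?_
    rw [mul_div_assoc', div_mul_eq_mul_div, div_le_one (by positivity)]
    exact hr
  have hAδ : 0 < A * δ := pos_of_mul_pos_right (by linarith) (norm_nonneg (q r))
  have hQr : Q ^ r ≤ (2 * ℓ₀ * E) ^ κ * A ^ κ := by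
    rw [← Real.mul_rpow (by linarith) (norm_nonneg _)]
    exact pow_le_rpow_logb_of_pow_le hE hQ (by linarith)
  have key : 1 / 2 < k₀ * (2 * ℓ₀ * E) ^ κ * A ^ (κ + 1) * δ :=
    calc 1 / 2 ≤ ‖q r‖ * (A * δ) := hhalf
      _ < k₀ * Q ^ r * (A * δ) := mul_lt_mul_of_pos_right (hqbd r) hAδ
      _ ≤ k₀ * ((2 * ℓ₀ * E) ^ κ * A ^ κ) * (A * δ) := by gcongr
      _ = k₀ * (2 * ℓ₀ * E) ^ κ * A ^ (κ + 1) * δ := by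
        rw [Real.rpow_add_one (by positivity)]
        ring
  rw [div_lt_iff₀ (by positivity)]
  linarith

theorem stmt_2_general (θ : ℂ) (K : Subfield ℂ) (hK : IsImagQuadratic K)
    (k₀ ℓ₀ E Q : ℝ) (hE : 1 < E) (hQ : 1 < Q)
    (hℓE : 1 ≤ 2 * ℓ₀ * E)
    (p q : ℕ → ℂ)
    (hpK : ∀ r, p r ∈ K) (hqK : ∀ r, q r ∈ K)
    (hpI : ∀ r, IsIntegral ℤ (p r)) (hqI : ∀ r, IsIntegral ℤ (q r))
    (hqbd : ∀ r, ‖q r‖ < k₀ * Q ^ r)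
    (happ : ∀ r, ‖q r * θ - p r‖ ≤ ℓ₀ / E ^ r)
    (κ c : ℝ) (hκ : κ = Real.log Q / Real.log E)
    (hc : c = 2 * k₀ * (2 * ℓ₀ * E) ^ κ) :
    ∀ P Q' : ℂ, P ∈ K → Q' ∈ K → IsIntegral ℤ P → IsIntegral ℤ Q' → Q' ≠ 0 →
      (∀ r : ℕ, P * q r ≠ p r * Q') →
      1 / (c * ‖Q'‖ ^ (κ + 1)) < ‖θ - P / Q'‖ := by
  intro P Q' hPK hQK hPI hQI hQ0 hne
  subst hκ hc
  have hsep (r : ℕ) : 1 ≤ ‖P * q r - p r * Q'‖ :=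
    hK.one_le_norm (K.sub_mem (K.mul_mem hPK (hqK r)) (K.mul_mem (hpK r) hQK))
      ((hPI.mul (hqI r)).sub ((hpI r).mul hQI)) (sub_ne_zero.mpr (hne r))
  exact one_div_lt_norm_sub_div_of_approx hE hQ.le hℓE hqbd happ
    (hK.one_le_norm hQK hQI hQ0) hsep

theorem stmt_2 (θ : ℂ) (K : Subfield ℂ) (hK : IsImagQuadratic K)
    (k₀ ℓ₀ E Q : ℝ) (hk₀ : 0 < k₀) (hℓ₀ : 0 < ℓ₀) (hE : 1 < E) (hQ : 1 < Q)
    (hℓE : 1 ≤ 2 * ℓ₀ * E)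
    (p q : ℕ → ℂ)
    (hpK : ∀ r, p r ∈ K) (hqK : ∀ r, q r ∈ K)
    (hpI : ∀ r, IsIntegral ℤ (p r)) (hqI : ∀ r, IsIntegral ℤ (q r))
    (hW : ∀ r, p r * q (r + 1) ≠ p (r + 1) * q r)
    (hqbd : ∀ r, ‖q r‖ < k₀ * Q ^ r)
    (happ : ∀ r, ‖q r * θ - p r‖ ≤ ℓ₀ / E ^ r)
    (κ c : ℝ) (hκ : κ = Real.log Q / Real.log E)
    (hc : c = 2 * k₀ * (2 * ℓ₀ * E) ^ κ) :
    ∀ P Q' : ℂ, P ∈ K → Q' ∈ K → IsIntegral ℤ P → IsIntegral ℤ Q' → Q' ≠ 0 →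
      (∀ r : ℕ, P * q r ≠ p r * Q') →
      1 / (c * ‖Q'‖ ^ (κ + 1)) < ‖θ - P / Q'‖ :=
  stmt_2_general θ K hK k₀ ℓ₀ E Q hE hQ hℓE p q hpK hqK hpI hqI hqbd happ κ c hκ hc
end
end

section
/- Let α, β be positive real numbers with 2β > α, and let w ∈ ℂ with Re(w) > 0. Then |∫₀^∞ t^{α−1}·(t+w)^{−β}·(t+w̄)^{−β} dt| ≥ ∫₀^∞ t^{α−1}·(t+|w|)^{−2β} dt, where w̄ is the complex conjugate of w and the complex powers are principal values. -/
open Finset MeasureTheory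

noncomputable section

/-!
For `t > 0` the point `t + w` lies in the open right half-plane, off the branch cut, so
`(t + w̄)^{-β}` is the conjugate of `(t + w)^{-β}` and the complex integrand is the nonnegative
real `t^{α-1} |t + w|^{-2β}`. As `|t + w| ≤ t + |w|`, this dominates the real integrand pointwise.
Both integrals converge by the Mellin criterion, comparing `|t + w|` with `t + Re w`.
-/

open Set Filter Topology Asymptotics ComplexConjugate Real

lemma integrableOn_rpow_mul_add_rpow_neg {α γ c : ℝ} (hα : 0 < α) (hαγ : α < γ)
    (hc : 0 < c) :
    IntegrableOn (fun t : ℝ => t ^ (α - 1) * (t + c) ^ (-γ)) (Ioi 0) := by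
  have hcont : ContinuousOn (fun t : ℝ => (t + c) ^ (-γ)) (Ioi 0) :=
    (by fun_prop : Continuous fun t : ℝ => t + c).continuousOn.rpow_const fun t (ht : 0 < t) =>
      Or.inl (by positivity)
  have htop : (fun t : ℝ => (t + c) ^ (-γ)) =O[atTop] (· ^ (-γ)) := by
    refine IsBigO.of_bound 1 ?_
    filter_upwards [eventually_gt_atTop 0] with t ht
    rw [one_mul, Real.norm_of_nonneg (by positivity), Real.norm_of_nonneg (by positivity)]
    exact Real.rpow_le_rpow_of_nonpos ht (by linarith) (by linarith)
  have hbot : (fun t : ℝ => (t + c) ^ (-γ)) =O[𝓝[>] 0] (· ^ (-(0 : ℝ))) := by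
    refine IsBigO.of_bound (c ^ (-γ)) ?_
    filter_upwards [self_mem_nhdsWithin] with t (ht : 0 < t)
    rw [neg_zero, Real.rpow_zero, norm_one, mul_one, Real.norm_of_nonneg (by positivity)]
    exact Real.rpow_le_rpow_of_nonpos hc (by linarith) (by linarith)
  exact mellin_convergent_of_isBigO_scalar (hcont.locallyIntegrableOn measurableSet_Ioi)
    htop hαγ hbot hα

lemma cpow_mul_conj_cpow_ofReal {z : ℂ} (hz : z.arg ≠ π) (s : ℝ) :
    z ^ (s : ℂ) * conj z ^ (s : ℂ) = ((‖z‖ ^ (2 * s) : ℝ) : ℂ) := by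
  rw [Complex.conj_cpow z _ hz, Complex.conj_ofReal, Complex.mul_conj, Complex.normSq_eq_norm_sq,
    Complex.norm_cpow_real, ← Real.rpow_natCast, ← Real.rpow_mul (norm_nonneg z), mul_comm]
  norm_num

lemma add_re_le_norm_ofReal_add (t : ℝ) (w : ℂ) : t + w.re ≤ ‖(t : ℂ) + w‖ := by
  simpa using Complex.re_le_norm ((t : ℂ) + w)

lemma ofReal_rpow_mul_cpow_mul_conj_cpow {w : ℂ} (hw : 0 < w.re) {t : ℝ} (ht : 0 ≤ t)
    (a β : ℝ) :
    ((t ^ a : ℝ) : ℂ) * ((t : ℂ) + w) ^ (-(β : ℂ)) * ((t : ℂ) + conj w) ^ (-(β : ℂ)) =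
      ((t ^ a * ‖(t : ℂ) + w‖ ^ (-(2 * β)) : ℝ) : ℂ) := by
  have harg : ((t : ℂ) + w).arg ≠ π := fun h => by
    have hre := (Complex.arg_eq_pi_iff.mp h).1
    simp only [Complex.add_re, Complex.ofReal_re] at hre
    linarith
  have hconj : (t : ℂ) + conj w = conj ((t : ℂ) + w) := by simp
  rw [hconj, mul_assoc, ← Complex.ofReal_neg, cpow_mul_conj_cpow_ofReal harg, Complex.ofReal_mul]
  ring_nf

lemma integrableOn_rpow_mul_norm_add_rpow_neg {α γ : ℝ} {w : ℂ} (hα : 0 < α) (hαγ : α < γ)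
    (hw : 0 < w.re) :
    IntegrableOn (fun t : ℝ => t ^ (α - 1) * ‖(t : ℂ) + w‖ ^ (-γ)) (Ioi 0) := by
  have hnorm_pos : ∀ t ∈ Ioi (0 : ℝ), 0 < ‖(t : ℂ) + w‖ := fun t (ht : 0 < t) => by
    linarith [add_re_le_norm_ofReal_add t w]
  have hcont : ContinuousOn (fun t : ℝ => t ^ (α - 1) * ‖(t : ℂ) + w‖ ^ (-γ)) (Ioi 0) :=
    (continuousOn_id.rpow_const fun t ht => Or.inl (ne_of_gt ht)).mul <|
      (by fun_prop : Continuous fun t : ℝ => ‖(t : ℂ) + w‖).continuousOn.rpow_const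
        fun t ht => Or.inl (hnorm_pos t ht).ne'
  refine (integrableOn_rpow_mul_add_rpow_neg hα hαγ hw).mono'
    (hcont.aestronglyMeasurable measurableSet_Ioi) ?_
  filter_upwards [ae_restrict_mem measurableSet_Ioi] with t (ht : 0 < t)
  rw [Real.norm_of_nonneg (by positivity)]
  exact mul_le_mul_of_nonneg_left (Real.rpow_le_rpow_of_nonpos (by linarith)
    (add_re_le_norm_ofReal_add t w) (by linarith)) (by positivity)

theorem stmt_6_general (α β : ℝ) (hα : 0 < α) (hαβ : α < 2 * β)
    (w : ℂ) (hw : 0 < w.re) :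
    (∫ t in Set.Ioi (0 : ℝ), t ^ (α - 1) * (t + ‖w‖) ^ (-(2 * β))) ≤
      ‖(∫ t in Set.Ioi (0 : ℝ),
        ((t ^ (α - 1) : ℝ) : ℂ) * ((t : ℂ) + w) ^ (-(β : ℂ)) *
          ((t : ℂ) + (starRingEnd ℂ) w) ^ (-(β : ℂ)))‖ := by
  rw [setIntegral_congr_fun measurableSet_Ioi fun t (ht : 0 < t) =>
      ofReal_rpow_mul_cpow_mul_conj_cpow hw ht.le (α - 1) β,
    integral_complex_ofReal, Complex.norm_real,
    Real.norm_of_nonneg (setIntegral_nonneg measurableSet_Ioi fun t (ht : 0 < t) => by positivity)]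
  refine setIntegral_mono_on
    (integrableOn_rpow_mul_add_rpow_neg hα hαβ (hw.trans_le (Complex.re_le_norm w)))
    (integrableOn_rpow_mul_norm_add_rpow_neg hα hαβ hw) measurableSet_Ioi
    fun t (ht : 0 < t) => ?_
  have hnorm_pos : 0 < ‖(t : ℂ) + w‖ := by linarith [add_re_le_norm_ofReal_add t w]
  have hnorm_le : ‖(t : ℂ) + w‖ ≤ t + ‖w‖ := by
    simpa [abs_of_pos ht] using norm_add_le (t : ℂ) w
  exact mul_le_mul_of_nonneg_left
    (Real.rpow_le_rpow_of_nonpos hnorm_pos hnorm_le (by linarith)) (by positivity)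

theorem stmt_6 (α β : ℝ) (hα : 0 < α) (hβ : 0 < β) (hαβ : α < 2 * β)
    (w : ℂ) (hw : 0 < w.re) :
    (∫ t in Set.Ioi (0 : ℝ), t ^ (α - 1) * (t + ‖w‖) ^ (-(2 * β))) ≤
      ‖(∫ t in Set.Ioi (0 : ℝ),
        ((t ^ (α - 1) : ℝ) : ℂ) * ((t : ℂ) + w) ^ (-(β : ℂ)) *
          ((t : ℂ) + (starRingEnd ℂ) w) ^ (-(β : ℂ)))‖ :=
  stmt_6_general α β hα hαβ w hw
end
end

section
/- Let m, n, r be integers with 0 < m < n, gcd(m,n) = 1 and r ≥ 0. For every z ∈ ℂ with |z| = 1 and |z − 1| < 1, |X_{m,n,r}(z)| < 1.072 · (r!·Γ(1−m/n)/Γ(r+1−m/n)) · |1 + √z|^{2r}, where √z is the principal square root. -/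
open Finset MeasureTheory

noncomputable section

/-!
Write `s = m / n`. Up to the factor `(1 - s)_r = Γ(r + 1 - s) / Γ(1 - s)`, the coefficients of
`X_{m,n,r}(z)` are the terms of the Leibniz expansion of the `r`-th derivative at `w = 0` of
`f(w) = (1 + z w)^(r + s) (1 + w)^(r - s)`. Cauchy's estimate on the unit disc bounds this
derivative by `r!` times the supremum of `|f|`, and for `|z| = 1`, `|w| < 1` we have
`|f(w)| ≤ |(1 + w)(1 + z w)|^(r - 1) · 2^(1 + s) · 2^(1 - s) ≤ 4 (2 + |1 + z|)^(r - 1)`.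
Finally `2 + |1 + z| = |1 + √z|^2`, and `|z - 1| < 1` forces `|1 + z| > √3` by the parallelogram
law, so that `4 / (2 + |1 + z|) < 4 / (2 + √3) = 8 - 4√3 < 1.072`.
-/

open Complex Polynomial Metric Filter Topology

theorem Real.Gamma_add_nat_eq_mul_ascPochhammer {s : ℝ} (hs : 0 < s) (r : ℕ) :
    Real.Gamma (s + r) = Real.Gamma s * (ascPochhammer ℝ r).eval s := by
  induction r with
  | zero => simp
  | succ r ih =>
    rw [Nat.cast_succ, ← add_assoc, Real.Gamma_add_one (by positivity), ih,
      ascPochhammer_succ_eval]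
    ring

section Coefficients

variable {K : Type*} [Field K] [CharZero K] {m n : ℕ}

theorem prod_mul_ascPochhammer_eq (hmn : m < n) {r k : ℕ} (hk : k ≤ r) :
    (∏ j ∈ range k, ((((r : K) - j) * n + m) / (((j : K) + 1) * n - m))) *
        (ascPochhammer K r).eval (1 - (m : K) / n) =
      (descPochhammer K k).eval ((r : K) + m / n) *
        (descPochhammer K (r - k)).eval ((r : K) - m / n) := by
  have hn : (n : K) ≠ 0 := by exact_mod_cast (Nat.zero_lt_of_lt hmn).ne'
  induction k with
  | zero =>
    rw [prod_range_zero, one_mul, descPochhammer_zero, eval_one, one_mul, Nat.sub_zero,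
      descPochhammer_eval_eq_ascPochhammer]
    ring_nf
  | succ k ih =>
    have hden : ((k : K) + 1) * n - m ≠ 0 := by
      rw [sub_ne_zero]
      exact_mod_cast (hmn.trans_le (Nat.le_mul_of_pos_left n k.succ_pos)).ne'
    obtain ⟨l, hl⟩ : ∃ l, r - k = l + 1 := ⟨r - (k + 1), by omega⟩
    rw [prod_range_succ, mul_right_comm, ih (by omega), hl, descPochhammer_succ_eval,
      descPochhammer_succ_eval, show r - (k + 1) = l by omega]
    have hl' : (l : K) + k + 1 = r := by exact_mod_cast (by omega : l + k + 1 = r)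
    have hfac : ((r : K) - m / n - l) * ((((r : K) - k) * n + m) / (((k : K) + 1) * n - m)) =
        r + m / n - k := by
      rw [mul_div_assoc', div_eq_iff hden, ← hl']
      field_simp
      ring
    linear_combination ((descPochhammer K k).eval ((r : K) + m / n) *
      (descPochhammer K l).eval ((r : K) - m / n)) * hfac

theorem Xcoef_mul_ascPochhammer (hmn : m < n) (r k : ℕ) :
    (Xcoef m n r k : K) * (ascPochhammer K r).eval (1 - (m : K) / n) =
      r.choose k * ((descPochhammer K k).eval ((r : K) + m / n) *
        (descPochhammer K (r - k)).eval ((r : K) - m / n)) := by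
  rcases le_or_gt k r with hk | hk
  · rw [← prod_mul_ascPochhammer_eq hmn hk, Xcoef]
    push_cast
    ring
  · simp [Xcoef, Nat.choose_eq_zero_of_lt hk]

end Coefficients

theorem iteratedDeriv_one_add_mul_cpow (a c : ℂ) (k : ℕ) {w : ℂ} (hw : 1 + c * w ∈ slitPlane) :
    iteratedDeriv k (fun w ↦ (1 + c * w) ^ a) w =
      c ^ k * (descPochhammer ℂ k).eval a * (1 + c * w) ^ (a - k) := by
  induction k generalizing w with
  | zero => simp
  | succ k ih =>
    have hU : IsOpen {w : ℂ | 1 + c * w ∈ slitPlane} :=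
      isOpen_slitPlane.preimage (by fun_prop)
    have hev : iteratedDeriv k (fun w ↦ (1 + c * w) ^ a) =ᶠ[𝓝 w]
        fun w ↦ c ^ k * (descPochhammer ℂ k).eval a * (1 + c * w) ^ (a - k) :=
      eventually_of_mem (hU.mem_nhds hw) fun v hv ↦ ih hv
    rw [iteratedDeriv_succ, hev.deriv_eq]
    have hlin : HasDerivAt (fun w ↦ 1 + c * w) c w := by
      simpa using ((hasDerivAt_id w).const_mul c).const_add 1
    rw [((hlin.cpow_const (c := a - k) hw).const_mul _).deriv, descPochhammer_succ_eval]
    push_cast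
    ring_nf

theorem contDiffAt_one_add_mul_cpow (a c : ℂ) (k : ℕ) :
    ContDiffAt ℂ k (fun w ↦ (1 + c * w) ^ a) 0 :=
  (AnalyticAt.cpow (by fun_prop) analyticAt_const (by simp)).contDiffAt

theorem iteratedDeriv_one_add_mul_cpow_mul_one_add_cpow_zero (a b c : ℂ) (k : ℕ) :
    iteratedDeriv k (fun w ↦ (1 + c * w) ^ b * (1 + w) ^ a) 0 =
      ∑ i ∈ range (k + 1), k.choose i *
        (c ^ i * (descPochhammer ℂ i).eval b * (descPochhammer ℂ (k - i)).eval a) := by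
  rw [iteratedDeriv_fun_mul (contDiffAt_one_add_mul_cpow b c k)
    (by simpa using contDiffAt_one_add_mul_cpow a 1 k)]
  refine sum_congr rfl fun i _ ↦ ?_
  have ha := iteratedDeriv_one_add_mul_cpow a 1 (k - i) (w := 0) (by simp)
  simp only [one_mul] at ha
  rw [iteratedDeriv_one_add_mul_cpow _ _ _ (by simp), ha]
  simp only [mul_zero, add_zero, one_cpow, mul_one, one_pow]
  ring

theorem ascPochhammer_eval_ofReal (r : ℕ) (x : ℝ) :
    (ascPochhammer ℂ r).eval (x : ℂ) = ((ascPochhammer ℝ r).eval x : ℝ) := by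
  rw [ascPochhammer_eval₂ ofRealHom, ← ofRealHom_eq_coe, eval₂_at_apply, ofRealHom_eq_coe]

theorem Xfun_mul_ascPochhammer {m n : ℕ} (hmn : m < n) (r : ℕ) (z : ℂ) :
    Xfun m n r z * (ascPochhammer ℂ r).eval (1 - (m : ℂ) / n) =
      iteratedDeriv r
        (fun w ↦ (1 + z * w) ^ ((r : ℂ) + m / n) * (1 + w) ^ ((r : ℂ) - m / n)) 0 := by
  rw [iteratedDeriv_one_add_mul_cpow_mul_one_add_cpow_zero, Xfun, sum_mul]
  refine sum_congr rfl fun k _ ↦ ?_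
  rw [mul_right_comm, Xcoef_mul_ascPochhammer hmn]
  ring

theorem norm_Xfun_mul_ascPochhammer {m n : ℕ} (hmn : m < n) (r : ℕ) (z : ℂ) :
    ‖Xfun m n r z‖ * (ascPochhammer ℝ r).eval (1 - (m : ℝ) / n) =
      ‖iteratedDeriv r (fun w ↦ (1 + z * w) ^ ((r + m / n : ℝ) : ℂ) *
        (1 + w) ^ ((r - m / n : ℝ) : ℂ)) 0‖ := by
  have hs : 0 < 1 - (m : ℝ) / n := by
    rw [sub_pos, div_lt_one (by exact_mod_cast Nat.zero_lt_of_lt hmn)]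
    exact_mod_cast hmn
  have h := congrArg norm (Xfun_mul_ascPochhammer hmn r z)
  rw [norm_mul, show 1 - (m : ℂ) / n = ((1 - (m : ℝ) / n : ℝ) : ℂ) by push_cast; rfl,
    ascPochhammer_eval_ofReal, norm_real, Real.norm_of_nonneg (ascPochhammer_pos _ _ hs).le] at h
  rw [h]
  push_cast
  rfl

theorem differentiableOn_one_add_mul_cpow_mul_one_add_cpow {z : ℂ} (hz : ‖z‖ ≤ 1) (a b : ℂ) :
    DifferentiableOn ℂ (fun w ↦ (1 + z * w) ^ b * (1 + w) ^ a) (ball 0 1) := by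
  intro w hw
  have hw : ‖w‖ < 1 := mem_ball_zero_iff.mp hw
  have hzw : ‖z * w‖ < 1 := by
    rw [norm_mul]; exact (mul_le_of_le_one_left (norm_nonneg w) hz).trans_lt hw
  refine (DifferentiableAt.mul ?_ ?_).differentiableWithinAt
  · exact (by fun_prop : DifferentiableAt ℂ (fun w ↦ 1 + z * w) w).cpow_const
      (mem_slitPlane_of_norm_lt_one hzw)
  · exact (by fun_prop : DifferentiableAt ℂ (fun w ↦ 1 + w) w).cpow_const
      (mem_slitPlane_of_norm_lt_one hw)

theorem norm_iteratedDeriv_le_of_forall_mem_ball_norm_le {F : Type*} [NormedAddCommGroup F]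
    [NormedSpace ℂ F] [CompleteSpace F] {f : ℂ → F} {c : ℂ} {R M : ℝ} (n : ℕ) (hR : 0 < R)
    (hf : DifferentiableOn ℂ f (ball c R)) (hM : ∀ w ∈ ball c R, ‖f w‖ ≤ M) :
    ‖iteratedDeriv n f c‖ ≤ n.factorial * M / R ^ n := by
  -- Cauchy's estimate needs continuity up to the boundary: use smaller discs and let `ρ → R`.
  have hρ : ∀ ρ ∈ Set.Ioo 0 R, ‖iteratedDeriv n f c‖ ≤ n.factorial * M / ρ ^ n := fun ρ hρ ↦
    norm_iteratedDeriv_le_of_forall_mem_sphere_norm_le n hρ.1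
      (hf.diffContOnCl_ball (closedBall_subset_ball hρ.2))
      fun w hw ↦ hM w (sphere_subset_ball hρ.2 hw)
  have hlim : Tendsto (fun ρ : ℝ ↦ n.factorial * M / ρ ^ n) (𝓝[<] R)
      (𝓝 (n.factorial * M / R ^ n)) :=
    tendsto_nhdsWithin_of_tendsto_nhds
      (continuousAt_const.div (continuous_pow n).continuousAt (pow_ne_zero n hR.ne')).tendsto
  exact ge_of_tendsto hlim (eventually_of_mem (Ioo_mem_nhdsLT hR) hρ)

theorem norm_one_add_mul_one_add_mul_le {z w : ℂ} (hz : ‖z‖ = 1) (hw : ‖w‖ ≤ 1) :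
    ‖(1 + w) * (1 + z * w)‖ ≤ 2 + ‖1 + z‖ := by
  have hw2 : ‖w‖ * ‖w‖ ≤ 1 := mul_le_one₀ hw (norm_nonneg w) hw
  calc ‖(1 + w) * (1 + z * w)‖ = ‖1 + (1 + z) * w + z * w * w‖ := by ring_nf
    _ ≤ 1 + ‖1 + z‖ * ‖w‖ + ‖w‖ * ‖w‖ := by
      refine (norm_add₃_le ..).trans ?_
      simp [hz]
    _ ≤ 2 + ‖1 + z‖ := by nlinarith [norm_nonneg (1 + z)]

theorem norm_one_add_mul_cpow_mul_one_add_cpow_le {z w : ℂ} (hz : ‖z‖ = 1) (hw : ‖w‖ ≤ 1)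
    {s : ℝ} (hs0 : 0 ≤ s) (hs1 : s ≤ 1) (k : ℕ) :
    ‖(1 + z * w) ^ ((k + 1 + s : ℝ) : ℂ) * (1 + w) ^ ((k + 1 - s : ℝ) : ℂ)‖ ≤
      4 * (2 + ‖1 + z‖) ^ k := by
  set p := ‖1 + w‖
  set q := ‖1 + z * w‖
  have hp : p ≤ 2 := (norm_add_le _ _).trans (by simp; linarith)
  have hq : q ≤ 2 := (norm_add_le _ _).trans (by simp [hz]; linarith)
  have hsplit : q ^ (k + 1 + s) * p ^ (k + 1 - s) = (p * q) ^ k * (q ^ (1 + s) * p ^ (1 - s)) := by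
    rw [add_assoc, add_sub_assoc, Real.rpow_add_of_nonneg (norm_nonneg _) k.cast_nonneg
      (by linarith), Real.rpow_add_of_nonneg (norm_nonneg _) k.cast_nonneg (by linarith)]
    simp only [Real.rpow_natCast]
    ring
  have h4 : q ^ (1 + s) * p ^ (1 - s) ≤ 4 := by
    calc q ^ (1 + s) * p ^ (1 - s) ≤ 2 ^ (1 + s) * 2 ^ (1 - s) := by gcongr
      _ = 4 := by rw [← Real.rpow_add two_pos]; norm_num
  have hpq : (p * q) ^ k ≤ (2 + ‖1 + z‖) ^ k := by
    gcongr
    rw [← norm_mul]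
    exact norm_one_add_mul_one_add_mul_le hz hw
  rw [norm_mul, norm_cpow_real, norm_cpow_real, hsplit]
  nlinarith [pow_nonneg (mul_nonneg (norm_nonneg (1 + w)) (norm_nonneg (1 + z * w))) k]

theorem norm_one_add_sq_of_norm_eq_one {v : ℂ} (hv : ‖v‖ = 1) : ‖1 + v‖ ^ 2 = 2 + 2 * v.re := by
  have h := Complex.sq_norm v
  rw [hv, normSq_apply] at h
  rw [Complex.sq_norm, normSq_apply]
  simp only [add_re, one_re, add_im, one_im]
  linarith

theorem norm_one_add_cpow_half_sq {z : ℂ} (hz : ‖z‖ = 1) :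
    ‖1 + z ^ (1 / 2 : ℂ)‖ ^ 2 = 2 + ‖1 + z‖ := by
  rw [one_div]
  have hu : ‖z ^ (2⁻¹ : ℂ)‖ = 1 := by
    rw [show (2⁻¹ : ℂ) = ((2⁻¹ : ℝ) : ℂ) by norm_num, norm_cpow_real, hz, Real.one_rpow]
  have hre : (z ^ (2⁻¹ : ℂ)).re = √((1 + z.re) / 2) := by rw [cpow_inv_two_re, hz]
  have hz_re : -1 ≤ z.re := by linarith [neg_abs_le z.re, abs_re_le_norm z]
  have h1z : ‖1 + z‖ = 2 * (z ^ (2⁻¹ : ℂ)).re := by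
    rw [← pow_left_inj₀ (norm_nonneg _) (by rw [hre]; positivity) two_ne_zero,
      norm_one_add_sq_of_norm_eq_one hz, mul_pow, hre, Real.sq_sqrt (by linarith)]
    ring
  rw [norm_one_add_sq_of_norm_eq_one hu, h1z]

theorem four_lt_mul_two_add_norm_one_add {z : ℂ} (hz : ‖z‖ = 1) (hz1 : ‖z - 1‖ < 1) :
    4 < 1.072 * (2 + ‖1 + z‖) := by
  have h := parallelogram_law_with_norm ℝ z 1
  rw [hz, norm_one, add_comm z] at h
  nlinarith [norm_nonneg (1 + z), norm_nonneg (z - 1)]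

theorem norm_Xfun_mul_ascPochhammer_le {m n : ℕ} (hmn : m < n) (k : ℕ) {z : ℂ} (hz : ‖z‖ = 1) :
    ‖Xfun m n (k + 1) z‖ * (ascPochhammer ℝ (k + 1)).eval (1 - (m : ℝ) / n) ≤
      (k + 1).factorial * (4 * (2 + ‖1 + z‖) ^ k) := by
  have hs1 : (m : ℝ) / n ≤ 1 :=
    (div_le_one (by exact_mod_cast Nat.zero_lt_of_lt hmn)).mpr (by exact_mod_cast hmn.le)
  have hD := norm_iteratedDeriv_le_of_forall_mem_ball_norm_le (k + 1) one_pos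
    (differentiableOn_one_add_mul_cpow_mul_one_add_cpow hz.le _ _)
    fun w hw ↦ norm_one_add_mul_cpow_mul_one_add_cpow_le hz (mem_ball_zero_iff.mp hw).le
      (by positivity) hs1 k
  rw [one_pow, div_one] at hD
  rw [norm_Xfun_mul_ascPochhammer hmn]
  simpa only [Nat.cast_add, Nat.cast_one] using hD

theorem stmt_7_general (m n r : ℕ) (hmn : m < n)
    (z : ℂ) (hz : ‖z‖ = 1) (hz1 : ‖z - 1‖ < 1) :
    ‖Xfun m n r z‖ <
      1.072 * ((r.factorial : ℝ) * Real.Gamma (1 - (m : ℝ) / n) /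
          Real.Gamma ((r : ℝ) + 1 - (m : ℝ) / n)) *
        ‖1 + z ^ (1/2 : ℂ)‖ ^ (2 * r) := by
  have hs1 : (m : ℝ) / n < 1 :=
    (div_lt_one (by exact_mod_cast Nat.zero_lt_of_lt hmn)).mpr (by exact_mod_cast hmn)
  have hΓ : (r.factorial : ℝ) * Real.Gamma (1 - m / n) / Real.Gamma ((r : ℝ) + 1 - m / n) =
      r.factorial / (ascPochhammer ℝ r).eval (1 - (m : ℝ) / n) := by
    rw [add_sub_assoc, add_comm, Real.Gamma_add_nat_eq_mul_ascPochhammer (by linarith),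
      mul_comm (Real.Gamma _), mul_div_mul_right _ _ (Real.Gamma_pos_of_pos (by linarith)).ne']
  rw [hΓ, pow_mul, norm_one_add_cpow_half_sq hz]
  have h4 := four_lt_mul_two_add_norm_one_add hz hz1
  rcases r with _ | k
  · norm_num [Xfun, Xcoef]
  · have hg := ascPochhammer_pos (k + 1) (1 - (m : ℝ) / n) (by linarith)
    have hX := norm_Xfun_mul_ascPochhammer_le hmn k hz
    generalize (ascPochhammer ℝ (k + 1)).eval (1 - (m : ℝ) / n) = g at hg hX ⊢
    have hpos : 0 < ((k + 1).factorial : ℝ) * (2 + ‖1 + z‖) ^ k := by positivity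
    rw [show 1.072 * ((k + 1).factorial / g) * (2 + ‖1 + z‖) ^ (k + 1) =
        (k + 1).factorial * (2 + ‖1 + z‖) ^ k * (1.072 * (2 + ‖1 + z‖)) / g by
      field_simp; ring, lt_div_iff₀ hg]
    nlinarith

theorem stmt_7 (m n r : ℕ) (hm : 0 < m) (hmn : m < n) (hcop : Nat.Coprime m n)
    (z : ℂ) (hz : ‖z‖ = 1) (hz1 : ‖z - 1‖ < 1) :
    ‖Xfun m n r z‖ <
      1.072 * ((r.factorial : ℝ) * Real.Gamma (1 - (m : ℝ) / n) /
          Real.Gamma ((r : ℝ) + 1 - (m : ℝ) / n)) *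
        ‖1 + z ^ (1/2 : ℂ)‖ ^ (2 * r) :=
  stmt_7_general m n r hmn z hz hz1
end
end

section
/- Let m, n, r be integers with 0 < m < n/2, gcd(m,n) = 1 and r ≥ 1. Then every complex root of the polynomial X_{m,n,r}(z) is a negative real number; that is, X_{m,n,r} has exactly r real zeros, all of which are negative. -/
open Finset MeasureTheory

noncomputable section

/-!
By the Leibniz rule, the `r`-th derivative of `w ^ (r - s) * (1 - w) ^ (r + s)` on `(0, 1)` is
`w ^ (-s) * (1 - w) ^ s * (1 - w) ^ r * X(w / (w - 1))` up to a nonzero constant, where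
`s = m / n` (a Rodrigues-type formula). For `j < r` the `j`-th derivative is continuous on
`[0, 1]` and vanishes at both ends, so by Rolle's theorem each differentiation adds a zero inside
`(0, 1)`, and the `r`-th derivative has `r` distinct zeros there. The map `w ↦ w / (w - 1)` sends
them to `r` distinct negative zeros of `X`; as `X` has degree at most `r`, these are all its roots.
-/

open Polynomial

theorem hasDerivAt_sum_antidiagonal_choose_mul {𝕜 : Type*} [NontriviallyNormedField 𝕜]
    {f g : ℕ → 𝕜 → 𝕜} {x : 𝕜} (hf : ∀ k, HasDerivAt (f k) (f (k + 1) x) x)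
    (hg : ∀ k, HasDerivAt (g k) (g (k + 1) x) x) (n : ℕ) :
    HasDerivAt (fun y ↦ ∑ p ∈ antidiagonal n, (n.choose p.1 : 𝕜) * (f p.1 y * g p.2 y))
      (∑ p ∈ antidiagonal (n + 1), ((n + 1).choose p.1 : 𝕜) * (f p.1 x * g p.2 x)) x := by
  rw [Finset.sum_antidiagonal_choose_succ_mul (fun i j ↦ f i x * g j x), ← sum_add_distrib]
  refine (HasDerivAt.fun_sum fun p _ ↦ ((hf p.1).mul (hg p.2)).const_mul _).congr_deriv ?_
  refine sum_congr rfl fun p hp ↦ ?_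
  rw [Nat.choose_symm_of_eq_add (mem_antidiagonal.1 hp).symm]
  ring

theorem exists_card_deriv_zeros {f f' : ℝ → ℝ} {a b : ℝ} (hab : a < b)
    (hf : ContinuousOn f (Set.Icc a b)) (hf' : ∀ x ∈ Set.Ioo a b, HasDerivAt f (f' x) x)
    (ha : f a = 0) (hb : f b = 0) {s : Finset ℝ} (hs : ∀ x ∈ s, x ∈ Set.Ioo a b ∧ f x = 0) :
    ∃ t : Finset ℝ, t.card = s.card + 1 ∧ ∀ x ∈ t, x ∈ Set.Ioo a b ∧ f' x = 0 := by
  set u := insert a (insert b s)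
  have hu : ∀ x ∈ u, x ∈ Set.Icc a b ∧ f x = 0 := by
    simp only [u, Finset.mem_insert]
    rintro x (rfl | rfl | hx)
    · exact ⟨Set.left_mem_Icc.2 hab.le, ha⟩
    · exact ⟨Set.right_mem_Icc.2 hab.le, hb⟩
    · exact ⟨Set.Ioo_subset_Icc_self (hs x hx).1, (hs x hx).2⟩
  have hcard : u.card = s.card + 2 := by
    rw [card_insert_of_notMem, card_insert_of_notMem fun h ↦ (hs b h).1.2.false]
    simp only [Finset.mem_insert, not_or]
    exact ⟨hab.ne, fun h ↦ (hs a h).1.1.false⟩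
  have rolle : ∀ q ∈ u ×ˢ u, q.1 < q.2 → ∃ z ∈ Set.Ioo q.1 q.2, f' z = 0 := by
    rintro ⟨x, y⟩ hq hxy
    obtain ⟨⟨hx, hfx⟩, ⟨hy, hfy⟩⟩ := And.imp (hu x) (hu y) (mem_product.1 hq)
    have hsub : Set.Icc x y ⊆ Set.Icc a b := Set.Icc_subset_Icc hx.1 hy.2
    exact exists_hasDerivAt_eq_zero hxy (hf.mono hsub) (hfx.trans hfy.symm)
      fun z hz ↦ hf' z (Set.Ioo_subset_Ioo hx.1 hy.2 hz)
  -- Any two points of `u` enclose a chosen zero of `f'`; interleaving then gives `#u ≤ #t + 1`.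
  choose! g hg_mem hg_zero using rolle
  set t := ((u ×ˢ u).filter fun q ↦ q.1 < q.2).image g
  have ht : ∀ z ∈ t, z ∈ Set.Ioo a b ∧ f' z = 0 := by
    simp only [t, Finset.mem_image, Finset.mem_filter]
    rintro _ ⟨q, ⟨hq, hlt⟩, rfl⟩
    have hx := (hu q.1 (mem_product.1 hq).1).1
    have hy := (hu q.2 (mem_product.1 hq).2).1
    exact ⟨Set.Ioo_subset_Ioo hx.1 hy.2 (hg_mem q hq hlt), hg_zero q hq hlt⟩
  have hinter : u.card ≤ t.card + 1 := card_le_of_interleaved fun x hx y hy hxy _ ↦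
    ⟨g (x, y), mem_image_of_mem _ (mem_filter.2 ⟨mem_product.2 ⟨hx, hy⟩, hxy⟩),
      hg_mem (x, y) (mem_product.2 ⟨hx, hy⟩) hxy⟩
  obtain ⟨t', ht't, ht'card⟩ := Finset.exists_subset_card_eq (s := t) (n := s.card + 1) (by omega)
  exact ⟨t', ht'card, fun z hz ↦ ht z (ht't hz)⟩

theorem descPochhammer_eval_mul_ascPochhammer_eval {R : Type*} [CommRing R] (a : R) (n k : ℕ) :
    (descPochhammer R n).eval a * (ascPochhammer R k).eval (a - (n : R) - (k : R) + 1) =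
      (descPochhammer R (n + k)).eval a := by
  rw [← descPochhammer_mul, eval_mul, eval_comp, eval_sub, eval_X, eval_natCast,
    descPochhammer_eval_eq_ascPochhammer R (a - n) k]

theorem Polynomial.roots_eq_of_natDegree_le_card {R : Type*} [CommRing R] [IsDomain R]
    {p : R[X]} (hp : p ≠ 0) {t : Finset R} (ht : ∀ x ∈ t, p.IsRoot x)
    (hdeg : p.natDegree ≤ t.card) : p.roots = t.val :=
  (Multiset.eq_of_le_of_card_le ((Multiset.le_iff_subset t.nodup).2 fun x hx ↦
    (mem_roots hp).2 (ht x hx)) ((card_roots' p).trans hdeg)).symm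

def rpowDeriv (a : ℝ) (k : ℕ) (x : ℝ) : ℝ := (descPochhammer ℝ k).eval a * x ^ (a - k)

theorem hasDerivAt_rpowDeriv (a : ℝ) (k : ℕ) {x : ℝ} (hx : x ≠ 0) :
    HasDerivAt (rpowDeriv a k) (rpowDeriv a (k + 1) x) x := by
  refine ((Real.hasDerivAt_rpow_const (p := a - k) (Or.inl hx)).const_mul _).congr_deriv ?_
  rw [rpowDeriv, descPochhammer_succ_eval,
    show a - ((k + 1 : ℕ) : ℝ) = a - k - 1 by push_cast; ring]
  ring

theorem continuous_rpowDeriv {a : ℝ} {k : ℕ} (hk : (k : ℝ) ≤ a) : Continuous (rpowDeriv a k) :=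
  continuous_const.mul (Real.continuous_rpow_const (sub_nonneg.2 hk))

-- For `a < k` this relies on the convention `0 ^ y = 0` for `y < 0`.
theorem rpowDeriv_zero {a : ℝ} {k : ℕ} (hk : (k : ℝ) ≠ a) : rpowDeriv a k 0 = 0 := by
  rw [rpowDeriv, Real.zero_rpow (sub_ne_zero.2 hk.symm), mul_zero]

/-- The `j`-th derivative of `x ↦ x ^ a * (1 - x) ^ b` on `(0, 1)`, expanded by the Leibniz rule. -/
def rodrigues (a b : ℝ) (j : ℕ) (x : ℝ) : ℝ :=
  ∑ p ∈ antidiagonal j,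
    (j.choose p.1 : ℝ) * ((-1) ^ p.1 * rpowDeriv b p.1 (1 - x) * rpowDeriv a p.2 x)

theorem hasDerivAt_rodrigues (a b : ℝ) (j : ℕ) {x : ℝ} (hx : x ∈ Set.Ioo 0 1) :
    HasDerivAt (rodrigues a b j) (rodrigues a b (j + 1) x) x := by
  refine hasDerivAt_sum_antidiagonal_choose_mul
    (f := fun k y ↦ (-1) ^ k * rpowDeriv b k (1 - y)) (fun k ↦ ?_)
    (fun k ↦ hasDerivAt_rpowDeriv a k hx.1.ne') j
  have h := ((hasDerivAt_rpowDeriv b k (sub_pos.2 hx.2).ne').comp_const_sub 1 x).const_mul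
    ((-1 : ℝ) ^ k)
  exact h.congr_deriv (by ring)

theorem continuous_rodrigues {a b : ℝ} {j : ℕ} (ha : (j : ℝ) ≤ a) (hb : (j : ℝ) ≤ b) :
    Continuous (rodrigues a b j) := by
  refine continuous_finsetSum _ fun p hp ↦ ?_
  have h1 : (p.1 : ℝ) ≤ j := by exact_mod_cast HasAntidiagonal.antidiagonal.fst_le hp
  have h2 : (p.2 : ℝ) ≤ j := by exact_mod_cast HasAntidiagonal.antidiagonal.snd_le hp
  exact continuous_const.mul ((continuous_const.mul ((continuous_rpowDeriv (h1.trans hb)).comp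
    (continuous_const.sub continuous_id))).mul (continuous_rpowDeriv (h2.trans ha)))

theorem rodrigues_zero {a b : ℝ} {j : ℕ} (ha : (j : ℝ) < a) : rodrigues a b j 0 = 0 := by
  refine sum_eq_zero fun p hp ↦ ?_
  have h2 : (p.2 : ℝ) ≤ j := by exact_mod_cast HasAntidiagonal.antidiagonal.snd_le hp
  rw [rpowDeriv_zero (h2.trans_lt ha).ne, mul_zero, mul_zero]

theorem rodrigues_one {a b : ℝ} {j : ℕ} (hb : (j : ℝ) < b) : rodrigues a b j 1 = 0 := by
  refine sum_eq_zero fun p hp ↦ ?_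
  have h1 : (p.1 : ℝ) ≤ j := by exact_mod_cast HasAntidiagonal.antidiagonal.fst_le hp
  rw [sub_self, rpowDeriv_zero (h1.trans_lt hb).ne, mul_zero, zero_mul, mul_zero]

theorem exists_card_rodrigues_zeros {a b : ℝ} {j : ℕ} (ha : (j : ℝ) < a + 1)
    (hb : (j : ℝ) < b + 1) :
    ∃ t : Finset ℝ, t.card = j ∧ ∀ x ∈ t, x ∈ Set.Ioo 0 1 ∧ rodrigues a b j x = 0 := by
  induction j with
  | zero => exact ⟨∅, rfl, by simp⟩
  | succ j ih =>
    push_cast at ha hb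
    obtain ⟨s, hs, hzero⟩ := ih (by linarith) (by linarith)
    obtain ⟨t, ht, htzero⟩ := exists_card_deriv_zeros zero_lt_one
      (continuous_rodrigues (by linarith) (by linarith)).continuousOn
      (fun x hx ↦ hasDerivAt_rodrigues a b j hx) (rodrigues_zero (by linarith))
      (rodrigues_one (by linarith)) hzero
    exact ⟨t, by rw [ht, hs], htzero⟩

/-- The terminating series `₂F₁(-r, -r - s; 1 - s; x)`; it is `X_{m,n,r}` for `s = m / n`. -/
def hypergeomX (r : ℕ) (s x : ℝ) : ℝ :=
  ∑ k ∈ range (r + 1),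
    (r.choose k : ℝ) * (descPochhammer ℝ k).eval (r + s) / (ascPochhammer ℝ k).eval (1 - s) * x ^ k

theorem rodrigues_eq_hypergeomX (r : ℕ) {s x : ℝ} (hs : s < 1) (hx : x ∈ Set.Ioo 0 1) :
    rodrigues (r - s) (r + s) r x =
      x ^ (-s) * (1 - x) ^ s * (descPochhammer ℝ r).eval (r - s) * (1 - x) ^ r *
        hypergeomX r s (x / (x - 1)) := by
  have hx0 : 0 < x := hx.1
  have hx1 : 0 < 1 - x := sub_pos.2 hx.2
  rw [rodrigues, hypergeomX, Finset.Nat.sum_antidiagonal_eq_sum_range_succ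
    (fun k l ↦ (r.choose k : ℝ) * ((-1) ^ k * rpowDeriv (r + s) k (1 - x) * rpowDeriv (r - s) l x)),
    mul_sum]
  refine sum_congr rfl fun k hk ↦ ?_
  have hkr : k ≤ r := Nat.lt_succ_iff.1 (mem_range.1 hk)
  have hasc : 0 < (ascPochhammer ℝ k).eval (1 - s) := ascPochhammer_pos k _ (by linarith)
  have hdesc := descPochhammer_eval_mul_ascPochhammer_eval ((r : ℝ) - s) (r - k) k
  rw [Nat.sub_add_cancel hkr, Nat.cast_sub hkr, show (r : ℝ) - s - (r - k) - k + 1 = 1 - s by ring]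
    at hdesc
  have hxpow : x ^ ((r : ℝ) - s - ((r - k : ℕ) : ℝ)) = x ^ (-s) * x ^ k := by
    rw [Nat.cast_sub hkr, show (r : ℝ) - s - (r - k) = -s + k by ring, Real.rpow_add hx0,
      Real.rpow_natCast]
  have hypow : (1 - x) ^ ((r : ℝ) + s - k) = (1 - x) ^ s * (1 - x) ^ (r - k) := by
    rw [show (r : ℝ) + s - k = s + ((r - k : ℕ) : ℝ) by rw [Nat.cast_sub hkr]; ring,
      Real.rpow_add hx1, Real.rpow_natCast]
  have hratio : (x / (x - 1)) ^ k * (1 - x) ^ r = (-1) ^ k * x ^ k * (1 - x) ^ (r - k) := by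
    rw [← Nat.sub_add_cancel hkr, pow_add, Nat.add_sub_cancel,
      show x / (x - 1) = -x / (1 - x) by rw [← neg_sub, div_neg, neg_div], div_pow, neg_pow]
    field_simp
  rw [rpowDeriv, rpowDeriv, hxpow, hypow, ← hdesc]
  calc _ = x ^ (-s) * (1 - x) ^ s * (descPochhammer ℝ (r - k)).eval ((r : ℝ) - s) *
        (r.choose k : ℝ) * (descPochhammer ℝ k).eval ((r : ℝ) + s) *
        ((-1) ^ k * x ^ k * (1 - x) ^ (r - k)) := by ring
    _ = _ := by
      rw [← hratio]
      field_simp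

theorem exists_card_hypergeomX_neg_zeros (r : ℕ) {s : ℝ} (hs₀ : -1 < s) (hs₁ : s < 1) :
    ∃ t : Finset ℝ, t.card = r ∧ ∀ z ∈ t, z < 0 ∧ hypergeomX r s z = 0 := by
  obtain ⟨u, hu, hzero⟩ := exists_card_rodrigues_zeros (a := r - s) (b := r + s) (j := r)
    (by linarith) (by linarith)
  have hinj : Set.InjOn (fun x : ℝ ↦ x / (x - 1)) (Set.Ioo 0 1) := by
    intro x hx y hy hxy
    have hx1 : x - 1 ≠ 0 := by linarith [hx.2]
    have hy1 : y - 1 ≠ 0 := by linarith [hy.2]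
    rw [div_eq_div_iff hx1 hy1] at hxy
    linarith
  refine ⟨u.image fun x ↦ x / (x - 1), ?_, ?_⟩
  · rw [card_image_of_injOn (hinj.mono fun x hx ↦ (hzero x hx).1), hu]
  · simp only [Finset.mem_image]
    rintro _ ⟨x, hx, rfl⟩
    obtain ⟨hx01, hrod⟩ := hzero x hx
    have hx1 : 0 < 1 - x := sub_pos.2 hx01.2
    refine ⟨div_neg_of_pos_of_neg hx01.1 (by linarith), ?_⟩
    rw [rodrigues_eq_hypergeomX r hs₁ hx01] at hrod
    have hdesc : 0 < (descPochhammer ℝ r).eval ((r : ℝ) - s) := descPochhammer_pos (by linarith)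
    have hfactor : x ^ (-s) * (1 - x) ^ s * (descPochhammer ℝ r).eval ((r : ℝ) - s) *
        (1 - x) ^ r ≠ 0 := by
      have := Real.rpow_pos_of_pos hx01.1 (-s)
      have := Real.rpow_pos_of_pos hx1 s
      positivity
    exact (mul_eq_zero.1 hrod).resolve_left hfactor

theorem Xcoef_eq (m r k : ℕ) {n : ℕ} (hn : n ≠ 0) :
    (Xcoef m n r k : ℝ) = r.choose k * (descPochhammer ℝ k).eval (r + m / n : ℝ) /
      (ascPochhammer ℝ k).eval (1 - m / n : ℝ) := by
  have hn' : (n : ℝ) ≠ 0 := Nat.cast_ne_zero.2 hn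
  rw [Xcoef, Rat.cast_mul, Rat.cast_natCast, mul_div_assoc]
  congr 1
  induction k with
  | zero => simp
  | succ k ih =>
    rw [prod_range_succ, Rat.cast_mul, ih, descPochhammer_succ_eval, ascPochhammer_succ_eval,
      mul_div_mul_comm]
    congr 1
    rw [show (r + m / n - k : ℝ) = ((r - k) * n + m) / n by field_simp; ring,
      show (1 - m / n + k : ℝ) = ((k + 1) * n - m) / n by field_simp; ring,
      div_div_div_cancel_right₀ hn']
    push_cast
    rfl

theorem XfunR_eq_hypergeomX (m r : ℕ) {n : ℕ} (hn : n ≠ 0) :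
    XfunR m n r = hypergeomX r (m / n) := by
  ext x
  exact sum_congr rfl fun k _ ↦ by rw [Xcoef_eq m r k hn]

theorem eval_ofReal_XpolyC (m n r : ℕ) (x : ℝ) :
    (XpolyC m n r).eval (x : ℂ) = (XfunR m n r x : ℂ) := by
  simp [XpolyC, XfunR, eval_finsetSum]

theorem natDegree_XpolyC_le (m n r : ℕ) : (XpolyC m n r).natDegree ≤ r :=
  natDegree_sum_le_of_forall_le _ _ fun _ hk ↦
    (natDegree_C_mul_X_pow_le _ _).trans (Nat.lt_succ_iff.1 (mem_range.1 hk))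

theorem XpolyC_ne_zero (m n r : ℕ) : XpolyC m n r ≠ 0 := by
  have h : (XpolyC m n r).coeff 0 = 1 := by
    simp [XpolyC, coeff_X_pow, Xcoef]
  exact fun h0 ↦ by simp [h0] at h

theorem stmt_10_general (m n r : ℕ) (hmn : 2 * m < n) :
    (XpolyC m n r).roots.card = r ∧
      ∀ z ∈ (XpolyC m n r).roots, ∃ x : ℝ, x < 0 ∧ z = (x : ℂ) := by
  have hn : n ≠ 0 := by omega
  have hs₀ : -1 < (m / n : ℝ) := by linarith [show (0 : ℝ) ≤ m / n by positivity]
  have hs₁ : (m / n : ℝ) < 1 :=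
    (div_lt_one (by positivity)).2 (by exact_mod_cast (by omega : m < n))
  obtain ⟨t, htcard, ht⟩ := exists_card_hypergeomX_neg_zeros r hs₀ hs₁
  have hroots : (XpolyC m n r).roots = (t.map ⟨_, Complex.ofReal_injective⟩).val := by
    refine roots_eq_of_natDegree_le_card (XpolyC_ne_zero m n r) (fun z hz ↦ ?_) ?_
    · obtain ⟨x, hx, rfl⟩ := Finset.mem_map.1 hz
      simp [IsRoot, eval_ofReal_XpolyC, XfunR_eq_hypergeomX m r hn, (ht x hx).2]
    · simpa [htcard] using natDegree_XpolyC_le m n r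
  refine ⟨by simp [hroots, htcard], fun z hz ↦ ?_⟩
  obtain ⟨x, hx, rfl⟩ : ∃ x ∈ t, (x : ℂ) = z := by simpa [hroots] using hz
  exact ⟨x, (ht x hx).1, rfl⟩

theorem stmt_10 (m n r : ℕ) (hm : 0 < m) (hmn : 2 * m < n) (hcop : Nat.Coprime m n)
    (hr : 1 ≤ r) :
    (XpolyC m n r).roots.card = r ∧
      ∀ z ∈ (XpolyC m n r).roots, ∃ x : ℝ, x < 0 ∧ z = (x : ℂ) :=
  stmt_10_general m n r hmn
end
end

section
/- For every z ∈ ℂ with |z| ≤ 2, |1 − √(1+z)| ≥ ((√3 − 1)/2)·|z|, where √(1+z) denotes the principal square root of 1+z. -/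
open Finset MeasureTheory

noncomputable section

/-
Writing `w = √(1+z)`, we have `z = (w + 1)(w - 1)` and `‖w‖² = ‖1 + z‖ ≤ 3`, so
`‖z‖ ≤ (√3 + 1)‖1 - w‖`; the constant is `1 / (√3 + 1) = (√3 - 1)/2`.
-/

lemma norm_sq_sub_one_le_mul_norm_one_sub {R : Type*} [NormedRing R] [NormOneClass R]
    {w : R} {r : ℝ} (hw : ‖w‖ ≤ r) :
    ‖w ^ 2 - 1‖ ≤ (r + 1) * ‖1 - w‖ :=
  calc ‖w ^ 2 - 1‖ = ‖-((w + 1) * (1 - w))‖ := by noncomm_ring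
    _ ≤ ‖w + 1‖ * ‖1 - w‖ := (norm_neg _).trans_le (norm_mul_le _ _)
    _ ≤ (r + 1) * ‖1 - w‖ := by
      gcongr
      exact (norm_add_le _ _).trans (by rw [norm_one]; linarith)

lemma Complex.cpow_one_half_sq (x : ℂ) : (x ^ (1 / 2 : ℂ)) ^ 2 = x := by
  simp

lemma Complex.norm_cpow_one_half_le_sqrt {x : ℂ} {r : ℝ} (hx : ‖x‖ ≤ r) :
    ‖x ^ (1 / 2 : ℂ)‖ ≤ Real.sqrt r :=
  Real.le_sqrt_of_sq_le <| by rwa [← norm_pow, Complex.cpow_one_half_sq]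

theorem stmt_17 (z : ℂ) (hz : ‖z‖ ≤ 2) :
    (Real.sqrt 3 - 1) / 2 * ‖z‖ ≤
      ‖1 - (1 + z) ^ (1/2 : ℂ)‖ := by
  set w := (1 + z) ^ (1/2 : ℂ)
  have hw : ‖w‖ ≤ Real.sqrt 3 :=
    Complex.norm_cpow_one_half_le_sqrt <|
      (norm_add_le _ _).trans (by rw [norm_one]; linarith)
  have hz_eq : z = w ^ 2 - 1 := by rw [Complex.cpow_one_half_sq]; ring
  have hsqrt3 : (Real.sqrt 3 - 1) / 2 * (Real.sqrt 3 + 1) = 1 := by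
    nlinarith [Real.sq_sqrt (show (0 : ℝ) ≤ 3 by norm_num)]
  calc (Real.sqrt 3 - 1) / 2 * ‖z‖
      ≤ (Real.sqrt 3 - 1) / 2 * ((Real.sqrt 3 + 1) * ‖1 - w‖) := by
        gcongr
        · linarith [Real.one_le_sqrt.mpr (by norm_num : (1 : ℝ) ≤ 3)]
        · rw [hz_eq]; exact norm_sq_sub_one_le_mul_norm_one_sub hw
    _ = ‖1 - w‖ := by rw [← mul_assoc, hsqrt3, one_mul]
end
end

section
/- Let m, n, r be integers with 0 < m < n/2 and r ≥ 1. Then ∏_{i=1}^{r} (i·n − m) > (n/4)^r · ∏_{i=1}^{r} (r + i); equivalently, (n−m)(2n−m)⋯(rn−m) / ((r+1)(r+2)⋯(2r)) > (n/4)^r. -/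
open Finset MeasureTheory

noncomputable section

/-
Since `2m < n`, each factor `(i + 1) n - m` exceeds `(2i + 1) n / 2`. On the other side,
`(r + 1)(r + 2)⋯(2r) = (2r)!/r! = 2^r · 1 · 3 ⋯ (2r - 1)`, so `(n/4)^r ∏ (r + i)` is exactly
`∏ (2i + 1) n / 2`, and the comparison is factor by factor.
-/

namespace Nat

theorem prod_range_odd_mul_doubleFactorial_two_mul (r : ℕ) :
    (∏ i ∈ range r, (2 * i + 1)) * (2 * r)‼ = (2 * r)! := by
  induction r with
  | zero => rfl
  | succ r ih =>
    rw [prod_range_succ, (by ring : 2 * (r + 1) = 2 * r + 2), doubleFactorial_add_two,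
      factorial_succ, factorial_succ, ← ih]
    ring

theorem prod_range_add_add_one_eq_two_pow_mul_prod_odd (r : ℕ) :
    ∏ i ∈ range r, (r + i + 1) = 2 ^ r * ∏ i ∈ range r, (2 * i + 1) := by
  apply Nat.eq_of_mul_eq_mul_left r.factorial_pos
  calc r ! * ∏ i ∈ range r, (r + i + 1) = r ! * (r + 1).ascFactorial r := by
        simp only [ascFactorial_eq_prod_range, add_right_comm]
    _ = (2 * r)! := by rw [factorial_mul_ascFactorial, two_mul]
    _ = (2 * r)‼ * ∏ i ∈ range r, (2 * i + 1) := by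
        rw [← prod_range_odd_mul_doubleFactorial_two_mul, mul_comm]
    _ = r ! * (2 ^ r * ∏ i ∈ range r, (2 * i + 1)) := by
        rw [doubleFactorial_two_mul]; ring

end Nat

theorem div_four_pow_mul_prod_range_add_add_one {K : Type*} [Field K] [CharZero K] (x : K)
    (r : ℕ) : (x / 4) ^ r * ∏ i ∈ range r, ((r : K) + i + 1) = ∏ i ∈ range r, ((2 * i + 1) * (x / 2)) := by
  have h := congrArg (Nat.cast (R := K)) (Nat.prod_range_add_add_one_eq_two_pow_mul_prod_odd r)
  push_cast at h
  rw [h, ← mul_assoc, ← mul_pow, prod_mul_distrib, prod_const, card_range, mul_comm,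
    (by field_simp; norm_num : x / 4 * 2 = x / 2)]

theorem stmt_19_general (m n r : ℕ) (hmn : 2 * m < n) (hr : 1 ≤ r) :
    ((n : ℝ) / 4) ^ r * ∏ i ∈ Finset.range r, ((r : ℝ) + i + 1) <
      ∏ i ∈ Finset.range r, (((i : ℝ) + 1) * n - m) := by
  have hmn' : (2 * m : ℝ) < n := by exact_mod_cast hmn
  have hn : (0 : ℝ) < n := by linarith [(m.cast_nonneg : (0 : ℝ) ≤ m)]
  rw [div_four_pow_mul_prod_range_add_add_one]
  refine prod_lt_prod_of_nonempty (fun i _ ↦ by positivity) (fun i _ ↦ ?_)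
    (nonempty_range_iff.mpr (by omega))
  have : (2 * i + 1) * ((n : ℝ) / 2) = ((i : ℝ) + 1) * n - n / 2 := by ring
  linarith

theorem stmt_19 (m n r : ℕ) (hm : 0 < m) (hmn : 2 * m < n) (hr : 1 ≤ r) :
    ((n : ℝ) / 4) ^ r * ∏ i ∈ Finset.range r, ((r : ℝ) + i + 1) <
      ∏ i ∈ Finset.range r, (((i : ℝ) + 1) * n - m) :=
  stmt_19_general m n r hmn hr
end
end
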